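/- arXiv:1802.08869 — 3 statements merged into one kernel-verified Lean document; each statement's English description precedes it below -/
import Mathlib

section
/- Myopic two-phase seeding can be strictly worse than optimal single-phase seeding: in the 5-node network with edges A→C (prob 1/2), B→C (prob 1/2), C→D (prob 1), C→E (prob 1), the myopic two-phase policy with budget split (1,1) — select the single-phase-optimal node C in phase 1, observe the diffusion, then select the best additional single node in phase 2 — yields expected extent of diffusion exactly 4, which is strictly less than the optimal single-phase expected extent 4.25 with budget 2. -/
/-! The edges C→D and C→E are live almost surely, so conditioning on the edges one at a time
turns the expected spread into the average of the reach counts over the four equally likely live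
graphs obtained by keeping or dropping A→C and B→C. No path is longer than two edges, which makes
reachability explicit, and the counts are: 12 for {C} (the largest among single seeds), 16 for C
together with A or B (each only adds itself), and 17 for {A, B} (C, D, E are reached unless both
A→C and B→C are dead). -/

open Finset

open scoped Classical in
/-- Nodes reachable from `S` using only edges in `L`. -/
noncomputable def reachSet {V : Type*} [Fintype V] (L : Finset (V × V)) (S : Finset V) :
    Finset V :=
  Finset.univ.filter (fun v => ∃ s ∈ S, Relation.ReflTransGen (fun a b => (a, b) ∈ L) s v)

/-- Expected number of influenced nodes under the IC model: a weighted average, over all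
live graphs `L ⊆ E`, of the number of nodes reachable from the seed set `S` in `L`. -/
noncomputable def expectedSpread {V : Type*} [Fintype V] [DecidableEq (V × V)]
    (E : Finset (V × V)) (p : V × V → ℝ) (S : Finset V) : ℝ :=
  ∑ L ∈ E.powerset,
    ((∏ e ∈ L, p e) * (∏ e ∈ E \ L, (1 - p e))) * ((reachSet L S).card : ℝ)

/-- The 5-node counterexample network: nodes A=0, B=1, C=2, D=3, E=4;
edges A→C, B→C, C→D, C→E. -/
def netE : Finset (Fin 5 × Fin 5) := {(0, 2), (1, 2), (2, 3), (2, 4)}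

/-- Edge influence probabilities: 1/2 on A→C and B→C, 1 on C→D and C→E. -/
noncomputable def netp : Fin 5 × Fin 5 → ℝ := fun e =>
  if e = (0, 2) ∨ e = (1, 2) then 1 / 2 else 1

section Conditioning

variable {V : Type*} [Fintype V] [DecidableEq (V × V)]

/-- Expected spread when the edges of `B` are live in addition to the random live subgraph of `E`. -/
noncomputable def condSpread (E : Finset (V × V)) (p : V × V → ℝ) (B : Finset (V × V))
    (S : Finset V) : ℝ :=
  ∑ L ∈ E.powerset,
    ((∏ e ∈ L, p e) * (∏ e ∈ E \ L, (1 - p e))) * ((reachSet (B ∪ L) S).card : ℝ)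

lemma expectedSpread_eq_condSpread (E : Finset (V × V)) (p : V × V → ℝ) (S : Finset V) :
    expectedSpread E p S = condSpread E p ∅ S := by
  simp only [expectedSpread, condSpread, empty_union]

lemma condSpread_empty (p : V × V → ℝ) (B : Finset (V × V)) (S : Finset V) :
    condSpread ∅ p B S = (reachSet B S).card := by
  simp [condSpread]

lemma condSpread_insert {a : V × V} {E : Finset (V × V)} (ha : a ∉ E) (p : V × V → ℝ)
    (B : Finset (V × V)) (S : Finset V) :
    condSpread (insert a E) p B S =
      p a * condSpread E p (insert a B) S + (1 - p a) * condSpread E p B S := by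
  rw [condSpread, sum_powerset_insert ha, add_comm, condSpread, condSpread, mul_sum, mul_sum]
  congr 1 <;> refine sum_congr rfl fun t ht => ?_
  all_goals have hat : a ∉ t := fun h => ha (mem_powerset.mp ht h)
  · rw [prod_insert hat, insert_sdiff_insert, sdiff_insert_of_notMem ha, union_insert,
      ← insert_union]
    ring
  · rw [insert_sdiff_of_notMem _ hat, prod_insert (fun h => ha (mem_sdiff.mp h).1)]
    ring

lemma condSpread_singleton (a : V × V) (p : V × V → ℝ) (B : Finset (V × V)) (S : Finset V) :
    condSpread {a} p B S =
      p a * (reachSet (insert a B) S).card + (1 - p a) * (reachSet B S).card := by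
  rw [← insert_empty, condSpread_insert (notMem_empty a), condSpread_empty, condSpread_empty]

end Conditioning

theorem Relation.reflTransGen_iff_of_no_three_chain {α : Type*} {r : α → α → Prop}
    (h : ∀ a b c d, r a b → r b c → r c d → False) {s v : α} :
    Relation.ReflTransGen r s v ↔ v = s ∨ r s v ∨ ∃ m, r s m ∧ r m v := by
  constructor
  · intro hsv
    induction hsv with
    | refl => exact Or.inl rfl
    | tail _ hbc ih =>
      rcases ih with rfl | hsb | ⟨m, hsm, hmb⟩
      · exact Or.inr (Or.inl hbc)
      · exact Or.inr (Or.inr ⟨_, hsb, hbc⟩)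
      · exact (h _ _ _ _ hsm hmb hbc).elim
  · rintro (rfl | hsv | ⟨m, hsm, hmv⟩)
    · exact .refl
    · exact .single hsv
    · exact .head hsm (.single hmv)

section TwoStep

variable {V : Type*} [Fintype V] [DecidableEq V]

def twoStepReach (L : Finset (V × V)) (S : Finset V) : Finset V :=
  univ.filter fun v => ∃ s ∈ S, v = s ∨ (s, v) ∈ L ∨ ∃ m, (s, m) ∈ L ∧ (m, v) ∈ L

lemma reachSet_eq_twoStepReach {L : Finset (V × V)}
    (hL : ∀ a b c d, (a, b) ∈ L → (b, c) ∈ L → (c, d) ∈ L → False) (S : Finset V) :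
    reachSet L S = twoStepReach L S := by
  ext v
  simp only [reachSet, twoStepReach, mem_filter, mem_univ, true_and,
    Relation.reflTransGen_iff_of_no_three_chain hL]

end TwoStep

lemma netE_no_three_chain :
    ∀ a b c d : Fin 5, (a, b) ∈ netE → (b, c) ∈ netE → (c, d) ∈ netE → False := by
  decide

lemma reachSet_eq_twoStepReach_of_subset_netE {L : Finset (Fin 5 × Fin 5)} (hL : L ⊆ netE)
    (S : Finset (Fin 5)) : reachSet L S = twoStepReach L S :=
  reachSet_eq_twoStepReach (fun a b c d hab hbc hcd =>
    netE_no_three_chain a b c d (hL hab) (hL hbc) (hL hcd)) S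

/-- Total reach over the four equally likely live graphs of the network: C→D and C→E are live
almost surely, A→C and B→C independently with probability 1/2. -/
def liveReachCount (S : Finset (Fin 5)) : ℕ :=
  #(twoStepReach {(2, 4), (2, 3), (1, 2), (0, 2)} S) + #(twoStepReach {(2, 4), (2, 3), (0, 2)} S) +
    #(twoStepReach {(2, 4), (2, 3), (1, 2)} S) + #(twoStepReach {(2, 4), (2, 3)} S)

lemma expectedSpread_netE (S : Finset (Fin 5)) :
    expectedSpread netE netp S = liveReachCount S / 4 := by
  rw [expectedSpread_eq_condSpread, netE]
  simp (disch := decide) only [condSpread_insert, condSpread_singleton,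
    reachSet_eq_twoStepReach_of_subset_netE, netp, if_pos, if_neg, insert_empty_eq]
  push_cast [liveReachCount]
  ring

/-- Myopic two-phase seeding with budget split (1,1) can be strictly worse than optimal
single-phase seeding with budget 2: phase 1 selects the single-phase-optimal node C
(influencing C, D, E); phase 2 then selects the best additional single node, and the
resulting expected extent of diffusion is exactly 4, strictly less than the optimal
single-phase value 4.25 achieved by `{A, B}`. -/
theorem myopic_two_phase_worse_than_single_phase :
    -- node C is the optimal phase-1 seed
    (∀ v : Fin 5, expectedSpread netE netp {v} ≤ expectedSpread netE netp ({2} : Finset (Fin 5))) ∧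
    -- given C, D, E influenced, every choice of a second seed yields expected spread ≤ 4
    (∀ v : Fin 5, v ∉ ({2, 3, 4} : Finset (Fin 5)) →
      expectedSpread netE netp ({2, v} : Finset (Fin 5)) ≤ 4) ∧
    -- and the best such choice achieves exactly 4
    (∃ v : Fin 5, v ∉ ({2, 3, 4} : Finset (Fin 5)) ∧
      expectedSpread netE netp ({2, v} : Finset (Fin 5)) = 4) ∧
    -- whereas optimal single phase with budget 2 achieves 4.25 > 4
    expectedSpread netE netp ({0, 1} : Finset (Fin 5)) = 4.25 ∧ (4 : ℝ) < 4.25 := by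
  have hC_best : ∀ v : Fin 5, liveReachCount {v} ≤ liveReachCount {2} := by decide
  have hC_add : ∀ v : Fin 5, v ∉ ({2, 3, 4} : Finset (Fin 5)) → liveReachCount {2, v} = 16 := by
    decide
  have hAB : liveReachCount {0, 1} = 17 := by decide
  simp only [expectedSpread_netE]
  refine ⟨fun v => ?_, fun v hv => ?_, ⟨0, by decide, ?_⟩, ?_, by norm_num⟩
  · gcongr
    exact_mod_cast hC_best v
  · rw [hC_add v hv]
    norm_num
  · rw [hC_add 0 (by decide)]
    norm_num
  · rw [hAB]
    norm_num
end

section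
/- Submodularity of reachability in a fixed live graph: for a finite directed graph with edge set L, the function σ_L(S) = |Reach_L(S)| is monotone and submodular in S, i.e., for all S ⊆ T and any node v, σ_L(S ∪ {v}) − σ_L(S) ≥ σ_L(T ∪ {v}) − σ_L(T). -/
/-!
Reachable sets distribute over unions, so `σ_L(S ∪ {v}) - σ_L(S) = |Reach_L({v}) \ Reach_L(S)|`,
and this shrinks as `S` grows because `Reach_L` is monotone.
-/

open Finset

section reachSet

variable {V : Type*} [Fintype V] (L : Finset (V × V))

lemma mem_reachSet {S : Finset V} {x : V} :
    x ∈ reachSet L S ↔ ∃ s ∈ S, Relation.ReflTransGen (fun a b => (a, b) ∈ L) s x := by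
  simp [reachSet]

lemma reachSet_mono : Monotone (reachSet L) := fun _ _ h _ hx => by
  obtain ⟨s, hs, hr⟩ := (mem_reachSet L).1 hx
  exact (mem_reachSet L).2 ⟨s, h hs, hr⟩

lemma reachSet_union [DecidableEq V] (S T : Finset V) :
    reachSet L (S ∪ T) = reachSet L S ∪ reachSet L T := by
  ext x
  simp only [mem_union, mem_reachSet, or_and_right, exists_or]

lemma reachSet_insert [DecidableEq V] (v : V) (S : Finset V) :
    reachSet L (insert v S) = reachSet L {v} ∪ reachSet L S := by
  rw [insert_eq, reachSet_union]

end reachSet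

lemma Finset.card_union_sub_card_le_of_subset {α : Type*} [DecidableEq α] (A : Finset α)
    {B C : Finset α} (h : B ⊆ C) :
    (#(A ∪ C) : ℤ) - #C ≤ #(A ∪ B) - #B := by
  rw [← card_sdiff_add_card A C, ← card_sdiff_add_card A B]
  push_cast
  simpa using card_le_card (sdiff_subset_sdiff (Subset.refl A) h)

/-- In a fixed live graph with edge set `L`, the function `S ↦ |Reach_L(S)|` is monotone
and submodular: for `S ⊆ T` and any node `v`, the marginal gain of adding `v` to `T` is at
most the marginal gain of adding `v` to `S`. -/
theorem reach_card_monotone_submodular {V : Type*} [Fintype V] [DecidableEq V]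
    (L : Finset (V × V)) :
    (∀ S T : Finset V, S ⊆ T → (reachSet L S).card ≤ (reachSet L T).card) ∧
    (∀ S T : Finset V, S ⊆ T → ∀ v : V,
      ((reachSet L (insert v T)).card : ℤ) - ((reachSet L T).card : ℤ) ≤
        ((reachSet L (insert v S)).card : ℤ) - ((reachSet L S).card : ℤ)) := by
  refine ⟨fun S T h => card_le_card (reachSet_mono L h), fun S T h v => ?_⟩
  rw [reachSet_insert, reachSet_insert]
  exact card_union_sub_card_le_of_subset _ (reachSet_mono L h)
end

section
/- In the 5-node counterexample network (edges A→C and B→C with probability 1/2, C→D and C→E with probability 1), the number of influenced nodes starting from seed set {A,B} takes value 2 with probability 1/4 and value 5 with probability 3/4; hence its variance is (3/4)(1/4)·9 = 27/16. -/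
/-!
The edges C→D and C→E are live with probability one, so once C is reached all five nodes are
influenced, while from {A, B} alone nothing else is reachable. Hence the spread is 2 exactly when
both independent coins on A→C and B→C fail (probability 1/4) and 5 otherwise; the mean is
2 · 1/4 + 5 · 3/4 = 4.25 and the variance (1/4)(3/4)(5 - 2)².
-/

open Finset

section LiveGraph

variable {α : Type*} [DecidableEq α]

/-- Each `a ∈ E` is live independently with probability `p a`. -/
def liveGraphExpectation (E : Finset α) (p : α → ℝ) (f : Finset α → ℝ) : ℝ :=
  ∑ L ∈ E.powerset, ((∏ e ∈ L, p e) * (∏ e ∈ E \ L, (1 - p e))) * f L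

@[simp]
theorem liveGraphExpectation_empty (p : α → ℝ) (f : Finset α → ℝ) :
    liveGraphExpectation ∅ p f = f ∅ := by
  simp [liveGraphExpectation]

theorem liveGraphExpectation_insert {a : α} {E : Finset α} (ha : a ∉ E) (p : α → ℝ)
    (f : Finset α → ℝ) :
    liveGraphExpectation (insert a E) p f =
      liveGraphExpectation E p (fun L => (1 - p a) * f L + p a * f (insert a L)) := by
  unfold liveGraphExpectation
  rw [sum_powerset_insert ha, ← sum_add_distrib]
  refine sum_congr rfl fun L hL => ?_
  have haL : a ∉ L := fun h => ha (mem_powerset.1 hL h)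
  rw [insert_sdiff_of_notMem _ haL, insert_sdiff_insert, sdiff_insert_of_notMem ha,
    prod_insert haL, prod_insert (notMem_sdiff_of_notMem_left ha)]
  ring

@[simp]
theorem liveGraphExpectation_singleton (a : α) (p : α → ℝ) (f : Finset α → ℝ) :
    liveGraphExpectation {a} p f = (1 - p a) * f ∅ + p a * f {a} := by
  rw [← insert_empty, liveGraphExpectation_insert (notMem_empty a), liveGraphExpectation_empty]

end LiveGraph

section Reach

variable {V : Type*} [Fintype V]

theorem subset_reachSet (L : Finset (V × V)) (S : Finset V) : S ⊆ reachSet L S := fun s hs => by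
  simpa [reachSet] using ⟨s, hs, Relation.ReflTransGen.refl⟩

theorem mem_reachSet_of_edge {L : Finset (V × V)} {S : Finset V} {u v : V}
    (hu : u ∈ reachSet L S) (huv : (u, v) ∈ L) : v ∈ reachSet L S := by
  obtain ⟨s, hs, hsu⟩ := by simpa [reachSet] using hu
  simpa [reachSet] using ⟨s, hs, hsu.tail huv⟩

theorem reachSet_eq_self_of_closed {L : Finset (V × V)} {S : Finset V}
    (hS : ∀ u v, (u, v) ∈ L → u ∈ S → v ∈ S) : reachSet L S = S := by
  refine (Finset.subset_iff.2 fun v hv => ?_).antisymm (subset_reachSet L S)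
  obtain ⟨s, hs, hsv⟩ := by simpa [reachSet] using hv
  clear hv
  induction hsv with
  | refl => exact hs
  | tail _ huv ih => exact hS _ _ huv ih

end Reach

theorem reachSet_AB_of_C_edges_only :
    reachSet ({(2, 3), (2, 4)} : Finset (Fin 5 × Fin 5)) {0, 1} = {0, 1} :=
  reachSet_eq_self_of_closed (by decide)

theorem reachSet_AB_eq_univ {L : Finset (Fin 5 × Fin 5)} (hAC_or_BC : (0, 2) ∈ L ∨ (1, 2) ∈ L)
    (hCD : (2, 3) ∈ L) (hCE : (2, 4) ∈ L) : reachSet L {0, 1} = univ := by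
  have hA : (0 : Fin 5) ∈ reachSet L {0, 1} := subset_reachSet _ _ (by simp)
  have hB : (1 : Fin 5) ∈ reachSet L {0, 1} := subset_reachSet _ _ (by simp)
  have hC : (2 : Fin 5) ∈ reachSet L {0, 1} :=
    hAC_or_BC.elim (mem_reachSet_of_edge hA) (mem_reachSet_of_edge hB)
  refine eq_univ_of_forall fun v => ?_
  fin_cases v
  exacts [hA, hB, hC, mem_reachSet_of_edge hC hCD, mem_reachSet_of_edge hC hCE]

theorem liveGraphExpectation_netE_card_reachSet (g : ℕ → ℝ) :
    liveGraphExpectation netE netp (fun L => g (reachSet L {0, 1}).card) =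
      1 / 4 * g 2 + 3 / 4 * g 5 := by
  have hfull : ∀ L : Finset (Fin 5 × Fin 5), (0, 2) ∈ L ∨ (1, 2) ∈ L → (2, 3) ∈ L →
      (2, 4) ∈ L → (reachSet L {0, 1}).card = 5 := fun L hAC_or_BC hCD hCE => by
    rw [reachSet_AB_eq_univ hAC_or_BC hCD hCE, card_univ, Fintype.card_fin]
  have hnone : (reachSet ({(2, 3), (2, 4)} : Finset (Fin 5 × Fin 5)) {0, 1}).card = 2 := by
    rw [reachSet_AB_of_C_edges_only]; rfl
  -- outer coin on A→C, inner coin on B→C; the sure edges C→D, C→E contribute no branching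
  calc _ = (1 - 1 / 2) * ((1 - 1 / 2) * g 2 + 1 / 2 * g 5)
          + 1 / 2 * ((1 - 1 / 2) * g 5 + 1 / 2 * g 5) := by
        simp [netE, liveGraphExpectation_insert, netp, hfull, hnone]
    _ = 1 / 4 * g 2 + 3 / 4 * g 5 := by ring

/-- Starting from seed set `{A, B}`, the number of influenced nodes is 2 with probability
1/4 and 5 with probability 3/4; hence the variance of the extent of diffusion (whose mean
is 4.25) equals 27/16. -/
theorem distribution_and_variance_AB :
    (∑ L ∈ netE.powerset, ((∏ e ∈ L, netp e) * (∏ e ∈ netE \ L, (1 - netp e))) *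
        (if (reachSet L ({0, 1} : Finset (Fin 5))).card = 2 then 1 else 0) = 1 / 4) ∧
    (∑ L ∈ netE.powerset, ((∏ e ∈ L, netp e) * (∏ e ∈ netE \ L, (1 - netp e))) *
        (if (reachSet L ({0, 1} : Finset (Fin 5))).card = 5 then 1 else 0) = 3 / 4) ∧
    (∑ L ∈ netE.powerset, ((∏ e ∈ L, netp e) * (∏ e ∈ netE \ L, (1 - netp e))) *
        (((reachSet L ({0, 1} : Finset (Fin 5))).card : ℝ) - 4.25) ^ 2 = 27 / 16) := by
  refine ⟨?_, ?_, ?_⟩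
  · exact (liveGraphExpectation_netE_card_reachSet fun n => if n = 2 then 1 else 0).trans
      (by norm_num)
  · exact (liveGraphExpectation_netE_card_reachSet fun n => if n = 5 then 1 else 0).trans
      (by norm_num)
  · exact (liveGraphExpectation_netE_card_reachSet fun n => ((n : ℝ) - 4.25) ^ 2).trans
      (by norm_num)
end
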